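/- Let Ω ⊆ Ω' be open sets in ℝⁿ and u a function with support in the closure of Ω. Then the class of admissible extensions W^N_Ω(u) = {w on Ω × (0,∞) : w(·,0) = u, w = 0 on ∂Ω × (0,∞), E_s(w) < ∞} (extended by zero outside Ω) is contained in W^N_{Ω'}(u), and consequently the Navier quadratic form Q_s^N[u; Ω] = (C_s/2s)·inf over W^N_Ω(u) of E_s is monotone nonincreasing with respect to domain inclusion: Q_s^N[u; Ω'] ≤ Q_s^N[u; Ω]. -/
import Mathlib

open MeasureTheory Set Real ENNReal

/-- The weighted extension (Caffarelli–Silvestre) energy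
`E_s(w) = ∫₀^∞ ∫_{ℝⁿ} y^{1-2s} |∇w(x,y)|² dx dy`. -/
noncomputable def extEnergy {n : ℕ} (s : ℝ) (w : EuclideanSpace ℝ (Fin n) × ℝ → ℝ) : ℝ≥0∞ :=
  ∫⁻ p in (univ : Set (EuclideanSpace ℝ (Fin n))) ×ˢ Ioi (0 : ℝ),
    ENNReal.ofReal (p.2 ^ (1 - 2 * s) * ‖fderiv ℝ w p‖ ^ 2)

/-- Admissible extensions for the Navier form on `Ω`: trace `u` at `y = 0`, vanishing outside
`Ω` (zero extension, which encodes the lateral boundary condition), finite energy. -/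
def WNavier {n : ℕ} (s : ℝ) (Ω : Set (EuclideanSpace ℝ (Fin n)))
    (u : EuclideanSpace ℝ (Fin n) → ℝ) : Set (EuclideanSpace ℝ (Fin n) × ℝ → ℝ) :=
  {w | (∀ x, w (x, 0) = u x) ∧ (∀ x ∉ Ω, ∀ y, 0 < y → w (x, y) = 0) ∧ extEnergy s w ≠ ⊤}

/-- Admissible extensions for the Dirichlet form: trace `u` at `y = 0`, finite energy. -/
def WDirichlet {n : ℕ} (s : ℝ) (u : EuclideanSpace ℝ (Fin n) → ℝ) :
    Set (EuclideanSpace ℝ (Fin n) × ℝ → ℝ) :=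
  {w | (∀ x, w (x, 0) = u x) ∧ extEnergy s w ≠ ⊤}

/-- The Navier quadratic form `Q_s^N[u; Ω] = (C_s / 2s) · inf_{w ∈ W^N_Ω(u)} E_s(w)`. -/
noncomputable def QNavier {n : ℕ} (s : ℝ) (Ω : Set (EuclideanSpace ℝ (Fin n)))
    (u : EuclideanSpace ℝ (Fin n) → ℝ) : ℝ≥0∞ :=
  ENNReal.ofReal (4 ^ s * Real.Gamma (1 + s) / Real.Gamma (1 - s) / (2 * s)) *
    ⨅ (w : EuclideanSpace ℝ (Fin n) × ℝ → ℝ) (_ : w ∈ WNavier s Ω u), extEnergy s w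

/-- The Dirichlet quadratic form `Q_s^D[u] = (C_s / 2s) · inf_{w ∈ W^D(u)} E_s(w)`. -/
noncomputable def QDirichlet {n : ℕ} (s : ℝ) (u : EuclideanSpace ℝ (Fin n) → ℝ) : ℝ≥0∞ :=
  ENNReal.ofReal (4 ^ s * Real.Gamma (1 + s) / Real.Gamma (1 - s) / (2 * s)) *
    ⨅ (w : EuclideanSpace ℝ (Fin n) × ℝ → ℝ) (_ : w ∈ WDirichlet s u), extEnergy s w

/-- Monotonicity of the Navier form with respect to domain inclusion: if `Ω ⊆ Ω'` then
`W^N_Ω(u) ⊆ W^N_{Ω'}(u)` and `Q_s^N[u; Ω'] ≤ Q_s^N[u; Ω]`. -/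
theorem QNavier_mono_domain {n : ℕ} (s : ℝ) (hs0 : 0 < s) (hs1 : s < 1)
    (Ω Ω' : Set (EuclideanSpace ℝ (Fin n))) (hΩ : IsOpen Ω) (hΩ' : IsOpen Ω')
    (hsub : Ω ⊆ Ω') (u : EuclideanSpace ℝ (Fin n) → ℝ)
    (hsupp : ∀ x ∉ closure Ω, u x = 0) :
    WNavier s Ω u ⊆ WNavier s Ω' u ∧ QNavier s Ω' u ≤ QNavier s Ω u := by
  have hsub' : WNavier s Ω u ⊆ WNavier s Ω' u := by
    rintro w ⟨h1, h2, h3⟩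
    exact ⟨h1, fun x hx y hy => h2 x (fun h => hx (hsub h)) y hy, h3⟩
  refine ⟨hsub', ?_⟩
  refine mul_le_mul_right ?_ _
  exact le_iInf₂ fun w hw => iInf₂_le w (hsub' hw)
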